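/- There exists a constant C > 0 such that for all a ∈ (0,1) and all γ ∈ ℝ, one has |∫_{{t ∈ ℝ : a < |t| < 1}} e^{it} t^{-1+iγ} dt| ≤ C e^{π|γ|}. -/

import Mathlib

/-!
For `t > 0` the principal branch gives `(-t)^w = e^{iπw} t^w`, which for `w = -1 + iγ` is
`-e^{-πγ} t^w`. Folding the integral onto `(a, 1)` and writing `e^{±it} = 1 + (e^{±it} - 1)`,
it becomes
`(1 - e^{-πγ}) ∫_a^1 t^w + ∫_a^1 (e^{it} - 1) t^w - e^{-πγ} ∫_a^1 (e^{-it} - 1) t^w`.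
The last two integrands are bounded by `1`, as `|e^{±it} - 1| ≤ t` and `|t^w| = 1/t`. In the first,
`∫_a^1 t^w = (1 - a^{iγ}) / (iγ)` has modulus at most `2/|γ|`, which the factor
`|1 - e^{-πγ}| ≤ π|γ| e^{π|γ|}` compensates.
-/

open MeasureTheory Real Complex

theorem Real.abs_exp_sub_one_le_mul_exp (x : ℝ) : |Real.exp x - 1| ≤ |x| * Real.exp |x| := by
  rcases le_or_gt 0 x with hx | hx
  · have h := Real.add_one_le_exp (-x)
    have h' : Real.exp (-x) * Real.exp x = 1 := by
      rw [← Real.exp_add, neg_add_cancel, Real.exp_zero]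
    rw [abs_of_nonneg hx, abs_of_nonneg (by linarith [Real.add_one_le_exp x])]
    nlinarith [Real.exp_pos x]
  · rw [abs_of_neg hx, abs_of_neg (by linarith [Real.exp_lt_one_iff.2 hx])]
    nlinarith [Real.add_one_le_exp x, Real.one_le_exp (neg_nonneg.2 hx.le)]

theorem Complex.exp_pi_mul_I_mul_neg_one_add (γ : ℝ) :
    Complex.exp (π * I * (-1 + γ * I)) = -(Real.exp (-(π * γ)) : ℂ) := by
  have h : (π : ℂ) * I * (-1 + γ * I) = (-(π * γ) : ℝ) - π * I := by
    push_cast; ring_nf; rw [I_sq]; ring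
  rw [h, Complex.exp_sub, Complex.exp_pi_mul_I, ← Complex.ofReal_exp]
  field_simp

theorem setIntegral_abs_mem_Ioo {E : Type*} [NormedAddCommGroup E] [NormedSpace ℝ E]
    {f : ℝ → E} {a b : ℝ} (ha : 0 ≤ a) (hab : a ≤ b)
    (hpos : IntervalIntegrable f volume a b) (hneg : IntervalIntegrable f volume (-b) (-a)) :
    ∫ t in {t : ℝ | a < |t| ∧ |t| < b}, f t = ∫ t in a..b, (f t + f (-t)) := by
  have hset : {t : ℝ | a < |t| ∧ |t| < b} = Set.Ioo (-b) (-a) ∪ Set.Ioo a b := by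
    ext t
    simp only [Set.mem_ofPred_eq, Set.mem_union, Set.mem_Ioo, lt_abs, abs_lt]
    grind
  have hdisj : Disjoint (Set.Ioo (-b) (-a)) (Set.Ioo a b) :=
    Set.disjoint_left.2 fun t ht ht' => by linarith [ht.2, ht'.1]
  rw [hset, setIntegral_union hdisj measurableSet_Ioo
      ((intervalIntegrable_iff_integrableOn_Ioo_of_le (neg_le_neg hab)).1 hneg)
      ((intervalIntegrable_iff_integrableOn_Ioo_of_le hab).1 hpos),
    ← integral_Ioc_eq_integral_Ioo, ← integral_Ioc_eq_integral_Ioo,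
    ← intervalIntegral.integral_of_le (neg_le_neg hab), ← intervalIntegral.integral_of_le hab,
    ← intervalIntegral.integral_comp_neg, add_comm,
    intervalIntegral.integral_add hpos]
  simpa using ((IntervalIntegrable.iff_comp_neg).1 hneg).symm

theorem intervalIntegrable_mul_ofReal_cpow {g : ℝ → ℂ} (hg : Continuous g) (w : ℂ) {a b : ℝ}
    (h0 : (0 : ℝ) ∉ Set.uIcc a b) :
    IntervalIntegrable (fun t : ℝ => g t * (t : ℂ) ^ w) volume a b :=
  (intervalIntegral.intervalIntegrable_cpow (Or.inr h0)).continuousOn_mul hg.continuousOn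

theorem integral_exp_mul_ofReal_cpow_add_comp_neg (w : ℂ) {a b : ℝ} (ha : 0 < a) (hb : 0 < b) :
    ∫ t in a..b, (exp (I * t) * (t : ℂ) ^ w + exp (I * (-t : ℝ)) * ((-t : ℝ) : ℂ) ^ w) =
      (1 + exp (π * I * w)) * (∫ t in a..b, (t : ℂ) ^ w) +
        (∫ t in a..b, (exp (I * t) - 1) * (t : ℂ) ^ w) +
        exp (π * I * w) * ∫ t in a..b, (exp (I * (-t : ℝ)) - 1) * (t : ℂ) ^ w := by
  have hI {g : ℝ → ℂ} (hg : Continuous g) :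
      IntervalIntegrable (fun t : ℝ => g t * (t : ℂ) ^ w) volume a b :=
    intervalIntegrable_mul_ofReal_cpow hg w (Set.notMem_uIcc_of_lt ha hb)
  rw [← intervalIntegral.integral_const_mul, ← intervalIntegral.integral_const_mul,
    ← intervalIntegral.integral_add, ← intervalIntegral.integral_add]
  · refine intervalIntegral.integral_congr fun t ht => ?_
    have ht : 0 ≤ t := (lt_min ha hb).le.trans ht.1
    rw [ofReal_cpow_of_nonpos (neg_nonpos.2 ht), ofReal_neg, neg_neg]
    ring
  · exact (hI continuous_const).add (hI (by fun_prop))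
  · exact (hI (by fun_prop)).const_mul _
  · exact hI continuous_const
  · exact hI (by fun_prop)

theorem norm_integral_mul_ofReal_cpow_le {g : ℝ → ℂ} (hg : ∀ t, ‖g t‖ ≤ |t|) {w : ℂ}
    (hw : w.re = -1) {a b : ℝ} (ha : 0 < a) (hab : a ≤ b) :
    ‖∫ t in a..b, g t * (t : ℂ) ^ w‖ ≤ b - a := by
  have h := intervalIntegral.norm_integral_le_of_norm_le_const (C := 1)
    (f := fun t : ℝ => g t * (t : ℂ) ^ w) (a := a) (b := b) fun t ht => by
      rw [Set.uIoc_of_le hab] at ht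
      have ht0 : 0 < t := ha.trans ht.1
      rw [norm_mul, norm_cpow_eq_rpow_re_of_pos ht0, hw, Real.rpow_neg_one,
        ← div_eq_mul_inv, div_le_one ht0]
      exact (hg t).trans_eq (abs_of_pos ht0)
  rwa [one_mul, abs_of_nonneg (sub_nonneg.2 hab)] at h

theorem norm_integral_ofReal_cpow_neg_one_add_le {γ : ℝ} (hγ : γ ≠ 0) {a b : ℝ}
    (ha : 0 < a) (hb : 0 < b) :
    ‖∫ t in a..b, (t : ℂ) ^ (-1 + γ * I)‖ ≤ 2 / |γ| := by
  have hw : -1 + γ * I ≠ -1 := by simpa using hγ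
  have h0 : (0 : ℝ) ∉ Set.uIcc a b := Set.notMem_uIcc_of_lt ha hb
  have hnorm : ∀ {x : ℝ}, 0 < x → ‖(x : ℂ) ^ (γ * I)‖ = 1 := fun hx => by
    simp [norm_cpow_eq_rpow_re_of_pos hx]
  rw [integral_cpow (Or.inr ⟨hw, h0⟩), neg_add_cancel_comm, norm_div]
  simp only [norm_mul, norm_real, norm_I, mul_one, Real.norm_eq_abs]
  gcongr
  exact (norm_sub_le _ _).trans (by rw [hnorm ha, hnorm hb]; norm_num)

theorem norm_one_sub_exp_mul_integral_cpow_le (γ : ℝ) {a b : ℝ} (ha : 0 < a) (hb : 0 < b) :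
    ‖(1 - (Real.exp (-(π * γ)) : ℂ)) * ∫ t in a..b, (t : ℂ) ^ (-1 + γ * I)‖ ≤
      2 * π * Real.exp (π * |γ|) := by
  rcases eq_or_ne γ 0 with rfl | hγ
  · simp only [mul_zero, neg_zero, Real.exp_zero, ofReal_one, sub_self, zero_mul, norm_zero]
    positivity
  have h1 : ‖1 - (Real.exp (-(π * γ)) : ℂ)‖ ≤ π * |γ| * Real.exp (π * |γ|) := by
    rw [← ofReal_one, ← ofReal_sub, norm_real, Real.norm_eq_abs, abs_sub_comm]
    simpa [abs_mul, abs_of_pos pi_pos] using Real.abs_exp_sub_one_le_mul_exp (-(π * γ))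
  calc _ ≤ π * |γ| * Real.exp (π * |γ|) * (2 / |γ|) := by
        rw [norm_mul]
        gcongr
        exact norm_integral_ofReal_cpow_neg_one_add_le hγ ha hb
    _ = 2 * π * Real.exp (π * |γ|) := by field_simp

/-- There exists `C > 0` such that for all `a ∈ (0,1)` and all `γ ∈ ℝ`,
`|∫_{a<|t|<1} e^{it} t^{-1+iγ} dt| ≤ C e^{π|γ|}`, the complex power being taken
with the principal branch of the logarithm. -/
theorem stmt1 :
    ∃ C : ℝ, 0 < C ∧ ∀ a γ : ℝ, a ∈ Set.Ioo (0 : ℝ) 1 →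
      ‖∫ t in {t : ℝ | a < |t| ∧ |t| < 1},
          Complex.exp (Complex.I * t) * (t : ℂ) ^ ((-1 : ℂ) + γ * Complex.I)‖ ≤
        C * Real.exp (π * |γ|) := by
  refine ⟨2 * π + 2, by positivity, fun a γ ⟨ha0, ha1⟩ => ?_⟩
  set w : ℂ := -1 + γ * I
  have hw : w.re = -1 := by simp [w]
  have hint {b c : ℝ} (h0 : (0 : ℝ) ∉ Set.uIcc b c) :=
    intervalIntegrable_mul_ofReal_cpow (g := fun t : ℝ => exp (I * t)) (by fun_prop) w h0
  rw [setIntegral_abs_mem_Ioo ha0.le ha1.le (hint (Set.notMem_uIcc_of_lt ha0 one_pos))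
      (hint (Set.notMem_uIcc_of_gt (by linarith) (by linarith))),
    integral_exp_mul_ofReal_cpow_add_comp_neg w ha0 one_pos, exp_pi_mul_I_mul_neg_one_add,
    ← sub_eq_add_neg]
  have hE : ‖(Real.exp (-(π * γ)) : ℂ)‖ ≤ Real.exp (π * |γ|) := by
    rw [norm_real, Real.norm_of_nonneg (Real.exp_nonneg _), Real.exp_le_exp, ← mul_neg]
    exact mul_le_mul_of_nonneg_left (neg_le_abs γ) pi_pos.le
  have hpos := norm_integral_mul_ofReal_cpow_le (g := fun t : ℝ => exp (I * t) - 1)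
    (fun t => norm_exp_I_mul_ofReal_sub_one_le.trans_eq (Real.norm_eq_abs t)) hw ha0 ha1.le
  have hneg := norm_integral_mul_ofReal_cpow_le (g := fun t : ℝ => exp (I * (-t : ℝ)) - 1)
    (fun t => norm_exp_I_mul_ofReal_sub_one_le.trans_eq (by rw [Real.norm_eq_abs, abs_neg]))
    hw ha0 ha1.le
  calc _ ≤ ‖(1 - (Real.exp (-(π * γ)) : ℂ)) * ∫ t in a..1, (t : ℂ) ^ w‖
        + ‖∫ t in a..1, (exp (I * t) - 1) * (t : ℂ) ^ w‖
        + ‖(Real.exp (-(π * γ)) : ℂ)‖ * ‖∫ t in a..1, (exp (I * (-t : ℝ)) - 1) * (t : ℂ) ^ w‖ :=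
        norm_add₃_le.trans_eq (by rw [neg_mul, norm_neg, norm_mul (Real.exp _ : ℂ)])
    _ ≤ 2 * π * Real.exp (π * |γ|) + 1 + Real.exp (π * |γ|) * 1 := by
        gcongr
        · exact norm_one_sub_exp_mul_integral_cpow_le γ ha0 one_pos
        · linarith
        · linarith
    _ ≤ (2 * π + 2) * Real.exp (π * |γ|) := by
        linarith [Real.one_le_exp (by positivity : 0 ≤ π * |γ|)]
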